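/- Let Q be a PMF on a finite set X, W(·|x) conditional PMFs on finite Y, s > 0 and a : X → ℝ, and define i_{s,a}(x,y) = log( q(x,y)^s e^{a(x)} / ∑_{x̄} Q(x̄) q(x̄,y)^s e^{a(x̄)} ) for a positive metric q. If the pair (Q, a) satisfies the stationarity conditions (KKT conditions) for maximizing I_{s,a}(Q) = E_{Q×W}[i_{s,a}(X,Y)], namely ∑_{x,y} Q(x)W(y|x) (q(x',y)^s e^{a(x')}) / (∑_{x̄} Q(x̄)q(x̄,y)^s e^{a(x̄)}) = 1 for all x', and the condition corresponding to Q, then the conditional expectation E_{W(·|x)}[i_{s,a}(x,Y)] is equal to the same constant λ + 1 for every x with Q(x) > 0. -/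
import Mathlib


theorem kkt_conditional_mean_constant
    {X Y : Type*} [Fintype X] [Fintype Y]
    (Q : X → ℝ) (W : X → Y → ℝ) (q : X → Y → ℝ) (a : X → ℝ) (s lam : ℝ)
    (hQ0 : ∀ x, 0 ≤ Q x) (hQ1 : ∑ x, Q x = 1)
    (hW0 : ∀ x y, 0 ≤ W x y) (hW1 : ∀ x, ∑ y, W x y = 1)
    (hq : ∀ x y, 0 < q x y) (hs : 0 < s)
    (hKKTa : ∀ x',
      ∑ x, ∑ y, Q x * W x y *
          (q x' y ^ s * Real.exp (a x') / ∑ x'', Q x'' * q x'' y ^ s * Real.exp (a x''))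
        = 1)
    (hKKTQ : ∀ x', 0 < Q x' →
      s * (∑ y, W x' y * Real.log (q x' y)) + a x'
        - (∑ y, W x' y * Real.log (∑ x'', Q x'' * q x'' y ^ s * Real.exp (a x'')))
        - (∑ x, ∑ y, Q x * W x y *
            (q x' y ^ s * Real.exp (a x') / ∑ x'', Q x'' * q x'' y ^ s * Real.exp (a x'')))
        - lam = 0) :
    ∀ x', 0 < Q x' →
      (∑ y, W x' y *
          Real.log (q x' y ^ s * Real.exp (a x')
            / ∑ x'', Q x'' * q x'' y ^ s * Real.exp (a x'')))
        = lam + 1 := by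
  intro x' hx'
  have hD : ∀ y, 0 < ∑ x'', Q x'' * q x'' y ^ s * Real.exp (a x'') := by
    intro y
    have hterm : ∀ x'' ∈ Finset.univ, 0 ≤ Q x'' * q x'' y ^ s * Real.exp (a x'') := by
      intro x'' _
      exact mul_nonneg (mul_nonneg (hQ0 _) (Real.rpow_nonneg (hq _ _).le s))
        (Real.exp_pos _).le
    refine Finset.sum_pos' hterm ⟨x', Finset.mem_univ _, ?_⟩
    have h1 := hq x' y
    positivity
  have hlog : ∀ y, Real.log (q x' y ^ s * Real.exp (a x')
      / ∑ x'', Q x'' * q x'' y ^ s * Real.exp (a x''))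
      = s * Real.log (q x' y) + a x'
        - Real.log (∑ x'', Q x'' * q x'' y ^ s * Real.exp (a x'')) := by
    intro y
    have h1 := hq x' y
    rw [Real.log_div (by positivity) (ne_of_gt (hD y)), Real.log_mul (by positivity)
      (Real.exp_ne_zero _), Real.log_rpow (hq x' y), Real.log_exp]
  have h1 := hKKTQ x' hx'
  rw [hKKTa x'] at h1
  calc (∑ y, W x' y *
          Real.log (q x' y ^ s * Real.exp (a x')
            / ∑ x'', Q x'' * q x'' y ^ s * Real.exp (a x'')))
      = ∑ y, (W x' y * (s * Real.log (q x' y)) + W x' y * a x'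
          - W x' y * Real.log (∑ x'', Q x'' * q x'' y ^ s * Real.exp (a x''))) := by
        refine Finset.sum_congr rfl fun y _ => ?_
        rw [hlog y]; ring
    _ = s * (∑ y, W x' y * Real.log (q x' y)) + a x'
        - (∑ y, W x' y * Real.log (∑ x'', Q x'' * q x'' y ^ s * Real.exp (a x''))) := by
        rw [Finset.sum_sub_distrib, Finset.sum_add_distrib, ← Finset.sum_mul, hW1 x',
          one_mul, Finset.mul_sum]
        congr 2
        exact Finset.sum_congr rfl fun y _ => by ring
    _ = lam + 1 := by linarith
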